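/- arXiv:2410.04043 — 2 statements merged into one kernel-verified Lean document; each statement's English description precedes it below -/
import Mathlib

section
/- Under the unique-optimum assumption, the geometric condition number Φ̂ := liminf_{δ→0⁺} D_δ/r_δ satisfies Φ ≤ Φ̂ ≤ 2Φ. -/
open Matrix
open scoped BigOperators

noncomputable section

namespace LPPaper

/-- Euclidean norm of a finite real vector. -/
def enorm {k : ℕ} (v : Fin k → ℝ) : ℝ := Real.sqrt (∑ i, (v i) ^ 2)

/-- ℓ₁ norm of a finite real vector. -/
def l1 {k : ℕ} (v : Fin k → ℝ) : ℝ := ∑ i, |v i|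

/-- Spectral norm (operator 2-norm w.r.t. Euclidean norms) of a real matrix. -/
def specNorm {α β : Type*} [Fintype α] [Fintype β] [DecidableEq β] (M : Matrix α β ℝ) : ℝ :=
  ‖LinearMap.toContinuousLinearMap (Matrix.toEuclideanLin M)‖

variable {m n : ℕ}

/-- Embedding of basic indices (the first `m` coordinates). -/
def bIdx (hmn : m ≤ n) (i : Fin m) : Fin n := Fin.castLE hmn i

/-- Embedding of nonbasic indices (the last `n - m` coordinates). -/
def nIdx (hmn : m ≤ n) (j : Fin (n - m)) : Fin n := ⟨m + j.val, by have := j.isLt; omega⟩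

/-- The basis matrix `B`: the first `m` columns of `A`. -/
def Bmat (hmn : m ≤ n) (A : Matrix (Fin m) (Fin n) ℝ) : Matrix (Fin m) (Fin m) ℝ :=
  Matrix.of fun i j => A i (bIdx hmn j)

/-- The nonbasic matrix `N`: the last `n - m` columns of `A`. -/
def Nmat (hmn : m ≤ n) (A : Matrix (Fin m) (Fin n) ℝ) : Matrix (Fin m) (Fin (n - m)) ℝ :=
  Matrix.of fun i j => A i (nIdx hmn j)

/-- The simplex tableau `B⁻¹N` at the optimal basis. -/
def BN (hmn : m ≤ n) (A : Matrix (Fin m) (Fin n) ℝ) : Matrix (Fin m) (Fin (n - m)) ℝ :=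
  (Bmat hmn A)⁻¹ * Nmat hmn A

/-- `q := Aᵀ(AAᵀ)⁻¹ b`. -/
def qvec (A : Matrix (Fin m) (Fin n) ℝ) (b : Fin m → ℝ) : Fin n → ℝ :=
  Aᵀ *ᵥ ((A * Aᵀ)⁻¹ *ᵥ b)

/-- Primal feasibility: `Ax = b`, `x ≥ 0`. -/
def PrimalFeasible (A : Matrix (Fin m) (Fin n) ℝ) (b : Fin m → ℝ) (x : Fin n → ℝ) : Prop :=
  A *ᵥ x = b ∧ ∀ i, 0 ≤ x i

/-- Dual feasibility: `Aᵀy + s = c`, `s ≥ 0`. -/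
def DualFeasible (A : Matrix (Fin m) (Fin n) ℝ) (c : Fin n → ℝ) (y : Fin m → ℝ)
    (s : Fin n → ℝ) : Prop :=
  Aᵀ *ᵥ y + s = c ∧ ∀ i, 0 ≤ s i

/-- The unique-optimum assumption (Assumption 1 of the paper), with the optimal basis being
(after a permutation of the variables) the set of the first `m` indices: the rows of `A` are
linearly independent, `x*` is the unique primal optimal solution, `(y*, s*)` the unique dual
optimal solution, the basis matrix `B` is invertible, `x*ᵢ > 0` exactly for the first `m`
indices and `s*ᵢ > 0` exactly for the remaining indices. -/
structure UniqueOpt (hmn : m ≤ n) (A : Matrix (Fin m) (Fin n) ℝ) (b : Fin m → ℝ)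
    (c : Fin n → ℝ) (xstar : Fin n → ℝ) (ystar : Fin m → ℝ) (sstar : Fin n → ℝ) : Prop where
  rows_indep : LinearIndependent ℝ (fun i => A i)
  primal_feas : PrimalFeasible A b xstar
  primal_opt : ∀ x, PrimalFeasible A b x → c ⬝ᵥ xstar ≤ c ⬝ᵥ x
  primal_uniq : ∀ x, PrimalFeasible A b x → c ⬝ᵥ x = c ⬝ᵥ xstar → x = xstar
  dual_feas : DualFeasible A c ystar sstar
  dual_opt : ∀ y s, DualFeasible A c y s → b ⬝ᵥ y ≤ b ⬝ᵥ ystar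
  dual_uniq : ∀ y s, DualFeasible A c y s → b ⬝ᵥ y = b ⬝ᵥ ystar → y = ystar ∧ s = sstar
  basis_isUnit : IsUnit (Bmat hmn A).det
  xstar_supp : ∀ i : Fin n, 0 < xstar i ↔ (i : ℕ) < m
  sstar_supp : ∀ i : Fin n, 0 < sstar i ↔ m ≤ (i : ℕ)

/-- The `max` factor appearing in the geometric condition number `Φ`. -/
def PhiFactor (hmn : m ≤ n) (A : Matrix (Fin m) (Fin n) ℝ) (xstar sstar : Fin n → ℝ) : ℝ :=
  max (⨆ j : Fin (n - m),
        Real.sqrt ((∑ i, (BN hmn A i j) ^ 2) + 1) / sstar (nIdx hmn j))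
      (⨆ i : Fin m,
        Real.sqrt ((∑ j, (BN hmn A i j) ^ 2) + 1) / xstar (bIdx hmn i))

/-- The geometric condition number `Φ`. -/
def Phi (hmn : m ≤ n) (A : Matrix (Fin m) (Fin n) ℝ) (xstar sstar : Fin n → ℝ) : ℝ :=
  (l1 xstar + l1 sstar) * PhiFactor hmn A xstar sstar


/-- Slack-form dual feasibility: `s ∈ c + Im(Aᵀ)` and `s ≥ 0`. -/
def SlackFeasible (A : Matrix (Fin m) (Fin n) ℝ) (c : Fin n → ℝ) (s : Fin n → ℝ) : Prop :=
  (∃ y, s = c + Aᵀ *ᵥ y) ∧ ∀ i, 0 ≤ s i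

/-- The duality gap `Gap(x,s) = cᵀx - qᵀ(c - s)`. -/
def Gap (A : Matrix (Fin m) (Fin n) ℝ) (b : Fin m → ℝ) (c : Fin n → ℝ)
    (x s : Fin n → ℝ) : ℝ :=
  c ⬝ᵥ x - qvec A b ⬝ᵥ (c - s)

/-- The `δ`-sublevel set `W_δ ⊆ ℝⁿ × ℝⁿ` of primal-dual feasible pairs with gap at most `δ`. -/
def Wlev (A : Matrix (Fin m) (Fin n) ℝ) (b : Fin m → ℝ) (c : Fin n → ℝ) (δ : ℝ) :
    Set ((Fin n → ℝ) × (Fin n → ℝ)) :=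
  {w | PrimalFeasible A b w.1 ∧ SlackFeasible A c w.2 ∧ Gap A b c w.1 w.2 ≤ δ}

/-- Euclidean norm on `ℝⁿ × ℝⁿ ≅ ℝ²ⁿ`. -/
def pairNorm (w : (Fin n → ℝ) × (Fin n → ℝ)) : ℝ :=
  Real.sqrt ((∑ i, (w.1 i) ^ 2) + ∑ i, (w.2 i) ^ 2)

/-- The diameter `D_δ` of the sublevel set `W_δ`. -/
def Ddiam (A : Matrix (Fin m) (Fin n) ℝ) (b : Fin m → ℝ) (c : Fin n → ℝ) (δ : ℝ) : ℝ :=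
  sSup {d | ∃ u ∈ Wlev A b c δ, ∃ v ∈ Wlev A b c δ, d = pairNorm (u - v)}

/-- The conic radius `r_δ` of the sublevel set `W_δ` (`min` over all `2n` coordinates). -/
def rrad (A : Matrix (Fin m) (Fin n) ℝ) (b : Fin m → ℝ) (c : Fin n → ℝ) (δ : ℝ) : ℝ :=
  sSup {t | ∃ w ∈ Wlev A b c δ, t = min (⨅ i, w.1 i) (⨅ i, w.2 i)}

/-- The geometric condition number `Φ̂ := liminf_{δ → 0⁺} D_δ / r_δ`. -/
def PhiHat (A : Matrix (Fin m) (Fin n) ℝ) (b : Fin m → ℝ) (c : Fin n → ℝ) : ℝ :=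
  Filter.liminf (fun δ => Ddiam A b c δ / rrad A b c δ) (nhdsWithin 0 (Set.Ioi (0:ℝ)))

/-!
Write `L = ‖x*‖₁ + ‖s*‖₁`. Around the optimal basis every primal feasible point is
`x* + ∑ⱼ x_{N j} uⱼ` with `uⱼ = (-(B⁻¹N)_{·j}, eⱼ)`, every dual slack is `s* + ∑ᵢ s_{B i} vᵢ` with
`vᵢ = (eᵢ, (B⁻¹N)_{i·})`, and the gap of a feasible pair is
`∑ⱼ x_{N j} s*_{N j} + ∑ᵢ x*_{B i} s_{B i}`. As `‖uⱼ‖ ≤ (Φ/L) s*_{N j}` and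
`‖vᵢ‖ ≤ (Φ/L) x*_{B i}`, every point of `W_δ` lies within `Φδ/L` of `(x*, s*)`, so
`D_δ ≤ 2Φδ/L`; conversely, moving from `(x*, s*)` along the single ray that realizes the maximum
in `Φ` until the gap reaches `δ` stays in `W_δ` for small `δ`, so `D_δ ≥ Φδ/L`. A point of `W_δ`
all of whose coordinates are at least `t` has gap at least `tL`, and moving along all the rays by
`t = δ/L` attains this, so `r_δ = δ/L` for small `δ`.
-/

open Filter Topology

section BasisSplit

variable (hmn : m ≤ n)

def basisSplit : Fin m ⊕ Fin (n - m) ≃ Fin n :=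
  finSumFinEquiv.trans (finCongr (Nat.add_sub_cancel' hmn))

@[simp] theorem basisSplit_symm_bIdx (i : Fin m) : (basisSplit hmn).symm (bIdx hmn i) = .inl i :=
  (Equiv.symm_apply_eq _).2 rfl

@[simp] theorem basisSplit_symm_nIdx (j : Fin (n - m)) :
    (basisSplit hmn).symm (nIdx hmn j) = .inr j :=
  (Equiv.symm_apply_eq _).2 rfl

theorem sum_split {M : Type*} [AddCommMonoid M] (f : Fin n → M) :
    ∑ k, f k = ∑ i, f (bIdx hmn i) + ∑ j, f (nIdx hmn j) := by
  rw [← (basisSplit hmn).sum_comp, Fintype.sum_sum_type]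
  rfl

theorem forall_split {p : Fin n → Prop} :
    (∀ k, p k) ↔ (∀ i, p (bIdx hmn i)) ∧ ∀ j, p (nIdx hmn j) := by
  rw [← (basisSplit hmn).forall_congr_right, Sum.forall]
  rfl

theorem funext_split {α : Type*} {f g : Fin n → α} (hB : ∀ i, f (bIdx hmn i) = g (bIdx hmn i))
    (hN : ∀ j, f (nIdx hmn j) = g (nIdx hmn j)) : f = g :=
  funext <| (forall_split hmn).2 ⟨hB, hN⟩

theorem dotProduct_split (u v : Fin n → ℝ) :
    u ⬝ᵥ v = (u ∘ bIdx hmn) ⬝ᵥ (v ∘ bIdx hmn) + (u ∘ nIdx hmn) ⬝ᵥ (v ∘ nIdx hmn) :=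
  sum_split hmn _

theorem mulVec_split (A : Matrix (Fin m) (Fin n) ℝ) (x : Fin n → ℝ) :
    A *ᵥ x = Bmat hmn A *ᵥ (x ∘ bIdx hmn) + Nmat hmn A *ᵥ (x ∘ nIdx hmn) :=
  funext fun _ => sum_split hmn _

theorem transpose_mulVec_comp_bIdx (A : Matrix (Fin m) (Fin n) ℝ) (z : Fin m → ℝ) :
    (Aᵀ *ᵥ z) ∘ bIdx hmn = (Bmat hmn A)ᵀ *ᵥ z := rfl

theorem transpose_mulVec_comp_nIdx (A : Matrix (Fin m) (Fin n) ℝ) (z : Fin m → ℝ) :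
    (Aᵀ *ᵥ z) ∘ nIdx hmn = (Nmat hmn A)ᵀ *ᵥ z := rfl

end BasisSplit

section DualityGap

variable {A : Matrix (Fin m) (Fin n) ℝ} {b : Fin m → ℝ} {c : Fin n → ℝ}

theorem isUnit_mul_transpose (hA : LinearIndependent ℝ (fun i => A i)) : IsUnit (A * Aᵀ) := by
  have := (PosDef.mul_conjTranspose_self A (vecMul_injective_iff.2 hA)).isUnit
  rwa [conjTranspose_eq_transpose_of_trivial] at this

theorem mulVec_qvec (hA : LinearIndependent ℝ (fun i => A i)) (b : Fin m → ℝ) :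
    A *ᵥ qvec A b = b := by
  rw [qvec, mulVec_mulVec, mulVec_mulVec,
    mul_nonsing_inv _ ((isUnit_iff_isUnit_det _).1 (isUnit_mul_transpose hA)), one_mulVec]

theorem gap_eq_dotProduct (hA : LinearIndependent ℝ (fun i => A i)) {x s : Fin n → ℝ}
    {y : Fin m → ℝ} (hx : A *ᵥ x = b) (hs : s = c + Aᵀ *ᵥ y) : Gap A b c x s = x ⬝ᵥ s := by
  have hq : qvec A b ⬝ᵥ Aᵀ *ᵥ y = b ⬝ᵥ y := by
    rw [dotProduct_mulVec, vecMul_transpose, mulVec_qvec hA]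
  have hxs : x ⬝ᵥ s = c ⬝ᵥ x + b ⬝ᵥ y := by
    rw [hs, dotProduct_add, dotProduct_mulVec, vecMul_transpose, hx, dotProduct_comm]
  rw [Gap, hxs, hs, sub_add_cancel_left, dotProduct_neg, hq, sub_neg_eq_add]

end DualityGap

section Rays

variable (hmn : m ≤ n) (A : Matrix (Fin m) (Fin n) ℝ)

/-- Column `j` is the edge direction `(-(B⁻¹N)_{·j}, e_j)` of the primal feasible set at `x*`. -/
def primalRays : Matrix (Fin n) (Fin (n - m)) ℝ :=
  (fromRows (-BN hmn A) 1).submatrix (basisSplit hmn).symm id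

/-- Column `i` is the edge direction `(e_i, (B⁻¹N)_{i·})` of the dual slack set at `s*`. -/
def dualRays : Matrix (Fin n) (Fin m) ℝ :=
  (fromRows 1 (BN hmn A)ᵀ).submatrix (basisSplit hmn).symm id

@[simp] theorem primalRays_mulVec_bIdx (α : Fin (n - m) → ℝ) (i : Fin m) :
    (primalRays hmn A *ᵥ α) (bIdx hmn i) = -(BN hmn A *ᵥ α) i := by
  simp [primalRays, mulVec, dotProduct]

@[simp] theorem primalRays_mulVec_nIdx (α : Fin (n - m) → ℝ) (j : Fin (n - m)) :
    (primalRays hmn A *ᵥ α) (nIdx hmn j) = α j := by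
  simp [primalRays, mulVec, dotProduct, one_apply]

@[simp] theorem dualRays_mulVec_bIdx (β : Fin m → ℝ) (i : Fin m) :
    (dualRays hmn A *ᵥ β) (bIdx hmn i) = β i := by
  simp [dualRays, mulVec, dotProduct, one_apply]

@[simp] theorem dualRays_mulVec_nIdx (β : Fin m → ℝ) (j : Fin (n - m)) :
    (dualRays hmn A *ᵥ β) (nIdx hmn j) = ((BN hmn A)ᵀ *ᵥ β) j := by
  simp [dualRays, mulVec, dotProduct]

theorem enorm_primalRays_col (j : Fin (n - m)) :
    enorm ((primalRays hmn A).col j) = √(∑ i, BN hmn A i j ^ 2 + 1) := by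
  simp [enorm, sum_split hmn, primalRays, one_apply]

theorem enorm_dualRays_col (i : Fin m) :
    enorm ((dualRays hmn A).col i) = √(∑ j, BN hmn A i j ^ 2 + 1) := by
  simp [enorm, sum_split hmn, dualRays, one_apply, add_comm]

variable {hmn A}

theorem mulVec_primalRays_mulVec (hB : IsUnit (Bmat hmn A)) (α : Fin (n - m) → ℝ) :
    A *ᵥ (primalRays hmn A *ᵥ α) = 0 := by
  have hB' : (primalRays hmn A *ᵥ α) ∘ bIdx hmn = -(BN hmn A *ᵥ α) := by
    funext i; simp
  have hN' : (primalRays hmn A *ᵥ α) ∘ nIdx hmn = α := by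
    funext j; simp
  rw [mulVec_split hmn, hB', hN', BN, mulVec_neg, mulVec_mulVec, ← Matrix.mul_assoc,
    mul_nonsing_inv _ ((isUnit_iff_isUnit_det _).1 hB), Matrix.one_mul, neg_add_cancel]

theorem dualRays_mulVec_eq (hB : IsUnit (Bmat hmn A)) (β : Fin m → ℝ) :
    dualRays hmn A *ᵥ β = Aᵀ *ᵥ ((Bmat hmn A)ᵀ⁻¹ *ᵥ β) := by
  have hBT : IsUnit (Bmat hmn A)ᵀ.det := by rwa [det_transpose, ← isUnit_iff_isUnit_det]
  refine funext_split hmn (fun i => ?_) (fun j => ?_)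
  · rw [dualRays_mulVec_bIdx, ← Function.comp_apply (f := Aᵀ *ᵥ _),
      transpose_mulVec_comp_bIdx, mulVec_mulVec, mul_nonsing_inv _ hBT, one_mulVec]
  · rw [dualRays_mulVec_nIdx, ← Function.comp_apply (f := Aᵀ *ᵥ _),
      transpose_mulVec_comp_nIdx, mulVec_mulVec, BN, transpose_mul, transpose_nonsing_inv]

theorem eq_add_primalRays_mulVec (hB : IsUnit (Bmat hmn A)) {x x₀ : Fin n → ℝ}
    (hx : A *ᵥ x = A *ᵥ x₀) (hx₀ : ∀ j, x₀ (nIdx hmn j) = 0) :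
    x = x₀ + primalRays hmn A *ᵥ (x ∘ nIdx hmn) := by
  set z := x - (x₀ + primalRays hmn A *ᵥ (x ∘ nIdx hmn))
  have hzN : z ∘ nIdx hmn = 0 := by
    funext j; simp [z, hx₀]
  have hBz : Bmat hmn A *ᵥ (z ∘ bIdx hmn) = 0 := by
    have hAz : A *ᵥ z = 0 := by
      simp [z, mulVec_sub, mulVec_add, hx, mulVec_primalRays_mulVec hB]
    rwa [mulVec_split hmn, hzN, mulVec_zero, add_zero] at hAz
  have hzB : z ∘ bIdx hmn = 0 :=
    mulVec_injective_iff_isUnit.2 hB (hBz.trans (mulVec_zero _).symm)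
  exact sub_eq_zero.1 (funext_split hmn (congrFun hzB) (congrFun hzN))

theorem eq_add_dualRays_mulVec (hB : IsUnit (Bmat hmn A)) {s s₀ : Fin n → ℝ} {z : Fin m → ℝ}
    (hs : s = s₀ + Aᵀ *ᵥ z) (hs₀ : ∀ i, s₀ (bIdx hmn i) = 0) :
    s = s₀ + dualRays hmn A *ᵥ (s ∘ bIdx hmn) := by
  have hBT : IsUnit (Bmat hmn A)ᵀ.det := by rwa [det_transpose, ← isUnit_iff_isUnit_det]
  have hsB : s ∘ bIdx hmn = (Bmat hmn A)ᵀ *ᵥ z := by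
    funext i; simp [hs, hs₀, ← transpose_mulVec_comp_bIdx hmn]
  rw [dualRays_mulVec_eq hB, hsB, mulVec_mulVec (M := (Bmat hmn A)ᵀ⁻¹), nonsing_inv_mul _ hBT,
    one_mulVec, ← hs]

end Rays

section Norms

theorem enorm_eq_norm {k : ℕ} (v : Fin k → ℝ) : enorm v = ‖WithLp.toLp 2 v‖ := by
  simp [enorm, EuclideanSpace.norm_eq]

theorem enorm_smul {k : ℕ} (a : ℝ) (v : Fin k → ℝ) : enorm (a • v) = |a| * enorm v := by
  rw [enorm_eq_norm, enorm_eq_norm, WithLp.toLp_smul, norm_smul, Real.norm_eq_abs]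

theorem enorm_mulVec_le {k : ℕ} {ι : Type*} [Fintype ι] (M : Matrix (Fin k) ι ℝ) (v : ι → ℝ) :
    enorm (M *ᵥ v) ≤ ∑ j, |v j| * enorm (M.col j) := by
  have hM : M *ᵥ v = ∑ j, v j • M.col j := by
    simp [mulVec_eq_sum, col]
  rw [hM, enorm_eq_norm, WithLp.toLp_sum]
  refine (norm_sum_le _ _).trans (Finset.sum_le_sum fun j _ => ?_)
  rw [← enorm_smul, enorm_eq_norm]

theorem pairNorm_eq_norm (w : (Fin n → ℝ) × (Fin n → ℝ)) :
    pairNorm w = ‖WithLp.toLp 2 (Sum.elim w.1 w.2)‖ := by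
  simp [pairNorm, EuclideanSpace.norm_eq, Fintype.sum_sum_type]

theorem pairNorm_nonneg (w : (Fin n → ℝ) × (Fin n → ℝ)) : 0 ≤ pairNorm w :=
  Real.sqrt_nonneg _

theorem pairNorm_add_le (u v : (Fin n → ℝ) × (Fin n → ℝ)) :
    pairNorm (u + v) ≤ pairNorm u + pairNorm v := by
  simpa only [pairNorm_eq_norm, Prod.fst_add, Prod.snd_add, Sum.elim_add_add, WithLp.toLp_add]
    using norm_add_le _ _

theorem pairNorm_neg (w : (Fin n → ℝ) × (Fin n → ℝ)) : pairNorm (-w) = pairNorm w := by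
  simp [pairNorm]

@[simp] theorem pairNorm_mk_zero (x : Fin n → ℝ) : pairNorm (x, 0) = enorm x := by
  simp [pairNorm, enorm]

@[simp] theorem pairNorm_zero_mk (s : Fin n → ℝ) : pairNorm (0, s) = enorm s := by
  simp [pairNorm, enorm]

theorem pairNorm_le_enorm_add_enorm (w : (Fin n → ℝ) × (Fin n → ℝ)) :
    pairNorm w ≤ enorm w.1 + enorm w.2 := by
  simpa using pairNorm_add_le (w.1, 0) (0, w.2)

end Norms

theorem eventually_forall_mul_le {ι : Type*} [Finite ι] (C : ι → ℝ) {D : ι → ℝ}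
    (hD : ∀ i, 0 < D i) : ∀ᶠ δ in 𝓝[>] (0 : ℝ), ∀ i, δ * C i ≤ D i :=
  eventually_all.2 fun i =>
    (((continuous_mul_const (C i)).tendsto' 0 0 (zero_mul _)).eventually_lt_const (hD i)
      |>.filter_mono nhdsWithin_le_nhds).mono fun _ => le_of_lt

theorem min_iInf_le_fst (w : (Fin n → ℝ) × (Fin n → ℝ)) (k : Fin n) :
    min (⨅ i, w.1 i) (⨅ i, w.2 i) ≤ w.1 k :=
  (min_le_left _ _).trans (ciInf_le (Finite.bddBelow_range _) k)

theorem min_iInf_le_snd (w : (Fin n → ℝ) × (Fin n → ℝ)) (k : Fin n) :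
    min (⨅ i, w.1 i) (⨅ i, w.2 i) ≤ w.2 k :=
  (min_le_right _ _).trans (ciInf_le (Finite.bddBelow_range _) k)

theorem le_liminf_and_liminf_le {α : Type*} {l : Filter α} [l.NeBot] {f : α → ℝ} {a b : ℝ}
    (h : ∀ᶠ x in l, a ≤ f x ∧ f x ≤ b) : a ≤ liminf f l ∧ liminf f l ≤ b :=
  ⟨le_liminf_of_le
      (isBoundedUnder_of_eventually_le (h.mono fun _ => And.right)).isCoboundedUnder_ge
      (h.mono fun _ => And.left),
    liminf_le_of_frequently_le (h.mono fun _ => And.right).frequently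
      (isBoundedUnder_of_eventually_ge (h.mono fun _ => And.left))⟩

namespace UniqueOpt

variable {hmn : m ≤ n} {A : Matrix (Fin m) (Fin n) ℝ} {b : Fin m → ℝ} {c : Fin n → ℝ}
  {xstar : Fin n → ℝ} {ystar : Fin m → ℝ} {sstar : Fin n → ℝ}
  (h : UniqueOpt hmn A b c xstar ystar sstar)
include h

theorem xstar_bIdx_pos (i : Fin m) : 0 < xstar (bIdx hmn i) :=
  (h.xstar_supp _).2 i.isLt

theorem sstar_nIdx_pos (j : Fin (n - m)) : 0 < sstar (nIdx hmn j) :=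
  (h.sstar_supp _).2 (Nat.le_add_right m j)

theorem xstar_nIdx (j : Fin (n - m)) : xstar (nIdx hmn j) = 0 :=
  (h.primal_feas.2 _).antisymm' <| not_lt.1 fun hpos =>
    (Nat.le_add_right m j).not_gt ((h.xstar_supp _).1 hpos)

theorem sstar_bIdx (i : Fin m) : sstar (bIdx hmn i) = 0 :=
  (h.dual_feas.2 _).antisymm' <| not_lt.1 fun hpos =>
    i.isLt.not_ge ((h.sstar_supp _).1 hpos)

theorem isUnit_Bmat : IsUnit (Bmat hmn A) := (isUnit_iff_isUnit_det _).2 h.basis_isUnit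

theorem sstar_eq : sstar = c + Aᵀ *ᵥ (-ystar) := by
  rw [mulVec_neg, ← h.dual_feas.1]
  abel

theorem gap_eq {x s : Fin n → ℝ} {y : Fin m → ℝ} (hx : A *ᵥ x = b) (hs : s = c + Aᵀ *ᵥ y) :
    Gap A b c x s =
      (x ∘ nIdx hmn) ⬝ᵥ (sstar ∘ nIdx hmn) + (xstar ∘ bIdx hmn) ⬝ᵥ (s ∘ bIdx hmn) := by
  have hcross : x ⬝ᵥ s + xstar ⬝ᵥ sstar = x ⬝ᵥ sstar + xstar ⬝ᵥ s := by
    rw [hs, h.sstar_eq]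
    simp only [dotProduct_add, dotProduct_mulVec, vecMul_transpose, hx, h.primal_feas.1]
    ring
  have hxN : xstar ∘ nIdx hmn = 0 := funext h.xstar_nIdx
  have hsB : sstar ∘ bIdx hmn = 0 := funext h.sstar_bIdx
  simp only [dotProduct_split hmn x sstar, dotProduct_split hmn xstar, hxN, hsB,
    dotProduct_zero, zero_dotProduct, zero_add, add_zero] at hcross
  rw [gap_eq_dotProduct h.rows_indep hx hs, hcross]

theorem add_rays_mem_Wlev {α : Fin (n - m) → ℝ} {β : Fin m → ℝ} {δ : ℝ}
    (hx : ∀ k, 0 ≤ (xstar + primalRays hmn A *ᵥ α) k)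
    (hs : ∀ k, 0 ≤ (sstar + dualRays hmn A *ᵥ β) k)
    (hgap : α ⬝ᵥ (sstar ∘ nIdx hmn) + (xstar ∘ bIdx hmn) ⬝ᵥ β ≤ δ) :
    (xstar + primalRays hmn A *ᵥ α, sstar + dualRays hmn A *ᵥ β) ∈ Wlev A b c δ := by
  have hAx : A *ᵥ (xstar + primalRays hmn A *ᵥ α) = b := by
    rw [mulVec_add, mulVec_primalRays_mulVec h.isUnit_Bmat, add_zero, h.primal_feas.1]
  have hs' : sstar + dualRays hmn A *ᵥ β = c + Aᵀ *ᵥ (-ystar + (Bmat hmn A)ᵀ⁻¹ *ᵥ β) := by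
    rw [dualRays_mulVec_eq h.isUnit_Bmat, h.sstar_eq, mulVec_add, add_assoc]
  refine ⟨⟨hAx, hx⟩, ⟨⟨_, hs'⟩, hs⟩, ?_⟩
  rw [h.gap_eq hAx hs']
  convert hgap using 3 <;> funext <;> simp [h.xstar_nIdx, h.sstar_bIdx]

theorem star_mem_Wlev {δ : ℝ} (hδ : 0 ≤ δ) : (xstar, sstar) ∈ Wlev A b c δ := by
  simpa using h.add_rays_mem_Wlev (α := 0) (β := 0) (by simpa using h.primal_feas.2)
    (by simpa using h.dual_feas.2) (by simpa)

theorem PhiFactor_nonneg : 0 ≤ PhiFactor hmn A xstar sstar :=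
  le_max_of_le_left <| Real.iSup_nonneg fun j =>
    div_nonneg (Real.sqrt_nonneg _) (h.sstar_nIdx_pos j).le

theorem sqrt_col_le_PhiFactor_mul (j : Fin (n - m)) :
    √(∑ i, BN hmn A i j ^ 2 + 1) ≤ PhiFactor hmn A xstar sstar * sstar (nIdx hmn j) := by
  rw [← div_le_iff₀ (h.sstar_nIdx_pos j)]
  exact le_max_of_le_left <|
    le_ciSup (f := fun j => √(∑ i, BN hmn A i j ^ 2 + 1) / sstar (nIdx hmn j))
      (Finite.bddAbove_range _) j

theorem sqrt_row_le_PhiFactor_mul (i : Fin m) :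
    √(∑ j, BN hmn A i j ^ 2 + 1) ≤ PhiFactor hmn A xstar sstar * xstar (bIdx hmn i) := by
  rw [← div_le_iff₀ (h.xstar_bIdx_pos i)]
  exact le_max_of_le_right <|
    le_ciSup (f := fun i => √(∑ j, BN hmn A i j ^ 2 + 1) / xstar (bIdx hmn i))
      (Finite.bddAbove_range _) i

theorem enorm_sub_xstar_le {x : Fin n → ℝ} (hx : PrimalFeasible A b x) :
    enorm (x - xstar) ≤
      PhiFactor hmn A xstar sstar * ((x ∘ nIdx hmn) ⬝ᵥ (sstar ∘ nIdx hmn)) := by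
  have hdecomp := eq_add_primalRays_mulVec h.isUnit_Bmat (hx.1.trans h.primal_feas.1.symm)
    h.xstar_nIdx
  calc enorm (x - xstar) = enorm (primalRays hmn A *ᵥ (x ∘ nIdx hmn)) := by
        nth_rw 1 [hdecomp]; rw [add_sub_cancel_left]
    _ ≤ ∑ j, |x (nIdx hmn j)| * enorm ((primalRays hmn A).col j) := enorm_mulVec_le _ _
    _ ≤ ∑ j, x (nIdx hmn j) * (PhiFactor hmn A xstar sstar * sstar (nIdx hmn j)) := by
        refine Finset.sum_le_sum fun j _ => ?_
        rw [abs_of_nonneg (hx.2 _), enorm_primalRays_col]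
        exact mul_le_mul_of_nonneg_left (h.sqrt_col_le_PhiFactor_mul j) (hx.2 _)
    _ = PhiFactor hmn A xstar sstar * ((x ∘ nIdx hmn) ⬝ᵥ (sstar ∘ nIdx hmn)) := by
        rw [dotProduct, Finset.mul_sum]
        exact Finset.sum_congr rfl fun _ _ => by simp only [Function.comp_apply]; ring

theorem enorm_sub_sstar_le {s : Fin n → ℝ} (hs : SlackFeasible A c s) :
    enorm (s - sstar) ≤
      PhiFactor hmn A xstar sstar * ((xstar ∘ bIdx hmn) ⬝ᵥ (s ∘ bIdx hmn)) := by
  obtain ⟨y, hy⟩ := hs.1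
  have hdecomp := eq_add_dualRays_mulVec h.isUnit_Bmat (s := s) (z := y + ystar)
    (by rw [hy, h.sstar_eq, mulVec_add, mulVec_neg]; abel) h.sstar_bIdx
  calc enorm (s - sstar) = enorm (dualRays hmn A *ᵥ (s ∘ bIdx hmn)) := by
        nth_rw 1 [hdecomp]; rw [add_sub_cancel_left]
    _ ≤ ∑ i, |s (bIdx hmn i)| * enorm ((dualRays hmn A).col i) := enorm_mulVec_le _ _
    _ ≤ ∑ i, s (bIdx hmn i) * (PhiFactor hmn A xstar sstar * xstar (bIdx hmn i)) := by
        refine Finset.sum_le_sum fun i _ => ?_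
        rw [abs_of_nonneg (hs.2 _), enorm_dualRays_col]
        exact mul_le_mul_of_nonneg_left (h.sqrt_row_le_PhiFactor_mul i) (hs.2 _)
    _ = PhiFactor hmn A xstar sstar * ((xstar ∘ bIdx hmn) ⬝ᵥ (s ∘ bIdx hmn)) := by
        rw [dotProduct, Finset.mul_sum]
        exact Finset.sum_congr rfl fun _ _ => by simp only [Function.comp_apply]; ring

theorem pairNorm_sub_star_le {δ : ℝ} {w : (Fin n → ℝ) × (Fin n → ℝ)} (hw : w ∈ Wlev A b c δ) :
    pairNorm (w - (xstar, sstar)) ≤ PhiFactor hmn A xstar sstar * δ := by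
  obtain ⟨hx, hs, hgap⟩ := hw
  obtain ⟨y, hy⟩ := hs.1
  rw [h.gap_eq hx.1 hy] at hgap
  calc pairNorm (w - (xstar, sstar)) ≤ enorm (w.1 - xstar) + enorm (w.2 - sstar) :=
        pairNorm_le_enorm_add_enorm _
    _ ≤ PhiFactor hmn A xstar sstar *
          ((w.1 ∘ nIdx hmn) ⬝ᵥ (sstar ∘ nIdx hmn) + (xstar ∘ bIdx hmn) ⬝ᵥ (w.2 ∘ bIdx hmn)) := by
        rw [mul_add]
        exact add_le_add (h.enorm_sub_xstar_le hx) (h.enorm_sub_sstar_le hs)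
    _ ≤ PhiFactor hmn A xstar sstar * δ := mul_le_mul_of_nonneg_left hgap h.PhiFactor_nonneg

theorem pairNorm_sub_le {δ : ℝ} {u v : (Fin n → ℝ) × (Fin n → ℝ)} (hu : u ∈ Wlev A b c δ)
    (hv : v ∈ Wlev A b c δ) : pairNorm (u - v) ≤ 2 * (PhiFactor hmn A xstar sstar * δ) :=
  calc pairNorm (u - v) = pairNorm ((u - (xstar, sstar)) + -(v - (xstar, sstar))) := by
        congr 1; abel
    _ ≤ pairNorm (u - (xstar, sstar)) + pairNorm (v - (xstar, sstar)) := by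
        rw [← pairNorm_neg (v - _)]
        exact pairNorm_add_le _ _
    _ ≤ 2 * (PhiFactor hmn A xstar sstar * δ) := by
        linarith [h.pairNorm_sub_star_le hu, h.pairNorm_sub_star_le hv]

theorem pairNorm_sub_le_Ddiam {δ : ℝ} {u v : (Fin n → ℝ) × (Fin n → ℝ)}
    (hu : u ∈ Wlev A b c δ) (hv : v ∈ Wlev A b c δ) : pairNorm (u - v) ≤ Ddiam A b c δ :=
  le_csSup ⟨_, by rintro _ ⟨u, hu, v, hv, rfl⟩; exact h.pairNorm_sub_le hu hv⟩
    ⟨u, hu, v, hv, rfl⟩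

theorem Ddiam_le {δ : ℝ} (hδ : 0 ≤ δ) :
    Ddiam A b c δ ≤ 2 * (PhiFactor hmn A xstar sstar * δ) :=
  csSup_le ⟨_, _, h.star_mem_Wlev hδ, _, h.star_mem_Wlev hδ, rfl⟩ <| by
    rintro _ ⟨u, hu, v, hv, rfl⟩; exact h.pairNorm_sub_le hu hv

theorem Ddiam_nonneg {δ : ℝ} (hδ : 0 ≤ δ) : 0 ≤ Ddiam A b c δ :=
  (pairNorm_nonneg _).trans (h.pairNorm_sub_le_Ddiam (h.star_mem_Wlev hδ) (h.star_mem_Wlev hδ))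

theorem eventually_le_Ddiam_of_col (j : Fin (n - m)) :
    ∀ᶠ δ in 𝓝[>] 0, √(∑ i, BN hmn A i j ^ 2 + 1) / sstar (nIdx hmn j) * δ ≤ Ddiam A b c δ := by
  filter_upwards [eventually_forall_mul_le (fun i => BN hmn A i j / sstar (nIdx hmn j))
    h.xstar_bIdx_pos, self_mem_nhdsWithin] with δ hsmall (hδ : 0 < δ)
  have hs := h.sstar_nIdx_pos j
  set a := δ / sstar (nIdx hmn j) with ha
  have hmem : (xstar + primalRays hmn A *ᵥ (a • Pi.single j 1), sstar + dualRays hmn A *ᵥ 0)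
      ∈ Wlev A b c δ := by
    refine h.add_rays_mem_Wlev ((forall_split hmn).2 ⟨fun i => ?_, fun j' => ?_⟩)
      (by simpa using h.dual_feas.2) ?_
    · have : a * BN hmn A i j = δ * (BN hmn A i j / sstar (nIdx hmn j)) := by rw [ha]; ring
      rw [Pi.add_apply, primalRays_mulVec_bIdx, mulVec_smul, mulVec_single_one]
      simp only [Pi.smul_apply, col_apply, smul_eq_mul]
      linarith [hsmall i]
    · simp only [Pi.add_apply, primalRays_mulVec_nIdx, h.xstar_nIdx, zero_add]
      exact mul_nonneg (div_nonneg hδ.le hs.le) (by rw [Pi.single_apply]; split_ifs <;> norm_num)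
    · simp [ha, hs.ne']
  calc √(∑ i, BN hmn A i j ^ 2 + 1) / sstar (nIdx hmn j) * δ
      = pairNorm ((xstar + primalRays hmn A *ᵥ (a • Pi.single j 1), sstar + dualRays hmn A *ᵥ 0)
          - (xstar, sstar)) := by
        simp [mulVec_smul, enorm_smul, enorm_primalRays_col, abs_of_pos (div_pos hδ hs), ha]
        ring
    _ ≤ Ddiam A b c δ := h.pairNorm_sub_le_Ddiam hmem (h.star_mem_Wlev hδ.le)

theorem eventually_le_Ddiam_of_row (i : Fin m) :
    ∀ᶠ δ in 𝓝[>] 0, √(∑ j, BN hmn A i j ^ 2 + 1) / xstar (bIdx hmn i) * δ ≤ Ddiam A b c δ := by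
  filter_upwards [eventually_forall_mul_le (fun j => -BN hmn A i j / xstar (bIdx hmn i))
    h.sstar_nIdx_pos, self_mem_nhdsWithin] with δ hsmall (hδ : 0 < δ)
  have hx := h.xstar_bIdx_pos i
  set a := δ / xstar (bIdx hmn i) with ha
  have hmem : (xstar + primalRays hmn A *ᵥ 0, sstar + dualRays hmn A *ᵥ (a • Pi.single i 1))
      ∈ Wlev A b c δ := by
    refine h.add_rays_mem_Wlev (by simpa using h.primal_feas.2)
      ((forall_split hmn).2 ⟨fun i' => ?_, fun j => ?_⟩) ?_
    · simp only [Pi.add_apply, dualRays_mulVec_bIdx, h.sstar_bIdx, zero_add, Pi.smul_apply,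
        smul_eq_mul]
      exact mul_nonneg (div_nonneg hδ.le hx.le) (by rw [Pi.single_apply]; split_ifs <;> norm_num)
    · have : a * BN hmn A i j = -(δ * (-BN hmn A i j / xstar (bIdx hmn i))) := by rw [ha]; ring
      rw [Pi.add_apply, dualRays_mulVec_nIdx, mulVec_smul, mulVec_single_one]
      simp only [Pi.smul_apply, col_apply, transpose_apply, smul_eq_mul]
      linarith [hsmall j]
    · simp [ha, hx.ne']
  calc √(∑ j, BN hmn A i j ^ 2 + 1) / xstar (bIdx hmn i) * δ
      = pairNorm ((xstar + primalRays hmn A *ᵥ 0, sstar + dualRays hmn A *ᵥ (a • Pi.single i 1))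
          - (xstar, sstar)) := by
        simp [mulVec_smul, enorm_smul, enorm_dualRays_col, abs_of_pos (div_pos hδ hx), ha]
        ring
    _ ≤ Ddiam A b c δ := h.pairNorm_sub_le_Ddiam hmem (h.star_mem_Wlev hδ.le)

theorem eventually_PhiFactor_mul_le_Ddiam :
    ∀ᶠ δ in 𝓝[>] 0, PhiFactor hmn A xstar sstar * δ ≤ Ddiam A b c δ := by
  filter_upwards [eventually_all.2 h.eventually_le_Ddiam_of_col,
    eventually_all.2 h.eventually_le_Ddiam_of_row, self_mem_nhdsWithin]
    with δ hcol hrow (hδ : 0 < δ)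
  have hD : 0 ≤ Ddiam A b c δ / δ := div_nonneg (h.Ddiam_nonneg hδ.le) hδ.le
  rw [← le_div_iff₀ hδ]
  exact max_le (Real.iSup_le (fun j => (le_div_iff₀ hδ).2 (hcol j)) hD)
    (Real.iSup_le (fun i => (le_div_iff₀ hδ).2 (hrow i)) hD)

theorem l1_add_l1_eq :
    l1 xstar + l1 sstar = ∑ i, xstar (bIdx hmn i) + ∑ j, sstar (nIdx hmn j) := by
  simp [l1, sum_split hmn, h.xstar_nIdx, h.sstar_bIdx, abs_of_pos (h.xstar_bIdx_pos _),
    abs_of_pos (h.sstar_nIdx_pos _)]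

theorem l1_add_l1_pos (hn : 0 < n) : 0 < l1 xstar + l1 sstar := by
  rw [l1, l1, ← Finset.sum_add_distrib]
  refine Finset.sum_pos (fun k _ => ?_) ⟨⟨0, hn⟩, Finset.mem_univ _⟩
  rcases lt_or_ge (k : ℕ) m with hk | hk
  · exact add_pos_of_pos_of_nonneg (abs_pos_of_pos ((h.xstar_supp k).2 hk)) (abs_nonneg _)
  · exact add_pos_of_nonneg_of_pos (abs_nonneg _) (abs_pos_of_pos ((h.sstar_supp k).2 hk))

theorem min_iInf_mul_le {δ : ℝ} {w : (Fin n → ℝ) × (Fin n → ℝ)} (hw : w ∈ Wlev A b c δ) :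
    min (⨅ i, w.1 i) (⨅ i, w.2 i) * (l1 xstar + l1 sstar) ≤ δ := by
  obtain ⟨hx, hs, hgap⟩ := hw
  obtain ⟨y, hy⟩ := hs.1
  rw [h.gap_eq hx.1 hy] at hgap
  set t := min (⨅ i, w.1 i) (⨅ i, w.2 i)
  calc t * (l1 xstar + l1 sstar)
      = ∑ j, t * sstar (nIdx hmn j) + ∑ i, xstar (bIdx hmn i) * t := by
        rw [h.l1_add_l1_eq, add_comm, mul_add, Finset.mul_sum, mul_comm t (∑ i, _), Finset.sum_mul]
    _ ≤ ∑ j, w.1 (nIdx hmn j) * sstar (nIdx hmn j) + ∑ i, xstar (bIdx hmn i) * w.2 (bIdx hmn i) :=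
        add_le_add
          (Finset.sum_le_sum fun j _ =>
            mul_le_mul_of_nonneg_right (min_iInf_le_fst w _) (h.sstar_nIdx_pos j).le)
          (Finset.sum_le_sum fun i _ =>
            mul_le_mul_of_nonneg_left (min_iInf_le_snd w _) (h.xstar_bIdx_pos i).le)
    _ ≤ δ := hgap

theorem min_iInf_le_div {δ : ℝ} {w : (Fin n → ℝ) × (Fin n → ℝ)} (hw : w ∈ Wlev A b c δ) :
    min (⨅ i, w.1 i) (⨅ i, w.2 i) ≤ δ / (l1 xstar + l1 sstar) := by
  rcases Nat.eq_zero_or_pos n with rfl | hn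
  · -- over the empty index set `Fin 0` both infima are `0`, and so is `δ / 0`
    simp [l1]
  · rw [le_div_iff₀ (h.l1_add_l1_pos hn)]
    exact h.min_iInf_mul_le hw

theorem rrad_le {δ : ℝ} (hδ : 0 ≤ δ) : rrad A b c δ ≤ δ / (l1 xstar + l1 sstar) :=
  csSup_le ⟨_, _, h.star_mem_Wlev hδ, rfl⟩ <| by
    rintro _ ⟨w, hw, rfl⟩; exact h.min_iInf_le_div hw

theorem le_rrad {δ : ℝ} {w : (Fin n → ℝ) × (Fin n → ℝ)} (hw : w ∈ Wlev A b c δ) :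
    min (⨅ i, w.1 i) (⨅ i, w.2 i) ≤ rrad A b c δ :=
  le_csSup ⟨_, by rintro _ ⟨w, hw, rfl⟩; exact h.min_iInf_le_div hw⟩ ⟨w, hw, rfl⟩

theorem eventually_div_le_rrad :
    ∀ᶠ δ in 𝓝[>] 0, δ / (l1 xstar + l1 sstar) ≤ rrad A b c δ := by
  rcases Nat.eq_zero_or_pos n with rfl | hn
  · filter_upwards [self_mem_nhdsWithin] with δ (hδ : 0 < δ)
    simpa [l1] using h.le_rrad (h.star_mem_Wlev hδ.le)
  have : Nonempty (Fin n) := ⟨⟨0, hn⟩⟩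
  set L := l1 xstar + l1 sstar
  have hLpos : 0 < L := h.l1_add_l1_pos hn
  filter_upwards [eventually_forall_mul_le (fun i => (1 + (BN hmn A *ᵥ 1) i) / L)
      h.xstar_bIdx_pos,
    eventually_forall_mul_le (fun j => (1 - ((BN hmn A)ᵀ *ᵥ 1) j) / L) h.sstar_nIdx_pos,
    self_mem_nhdsWithin] with δ hB hN (hδ : 0 < δ)
  set t := δ / L with ht
  have ht0 : 0 ≤ t := div_nonneg hδ.le hLpos.le
  set x := xstar + primalRays hmn A *ᵥ (t • 1)
  set s := sstar + dualRays hmn A *ᵥ (t • 1)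
  have hx : ∀ k, t ≤ x k := by
    refine (forall_split hmn).2 ⟨fun i => ?_, fun j => ?_⟩
    · have : t * (1 + (BN hmn A *ᵥ 1) i) = δ * ((1 + (BN hmn A *ᵥ 1) i) / L) := by rw [ht]; ring
      simp only [x, Pi.add_apply, primalRays_mulVec_bIdx, mulVec_smul, Pi.smul_apply,
        smul_eq_mul]
      linarith [hB i]
    · simp [x, h.xstar_nIdx]
  have hs : ∀ k, t ≤ s k := by
    refine (forall_split hmn).2 ⟨fun i => ?_, fun j => ?_⟩
    · simp [s, h.sstar_bIdx]
    · have : t * (1 - ((BN hmn A)ᵀ *ᵥ 1) j) = δ * ((1 - ((BN hmn A)ᵀ *ᵥ 1) j) / L) := by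
        rw [ht]; ring
      simp only [s, Pi.add_apply, dualRays_mulVec_nIdx, mulVec_smul, Pi.smul_apply, smul_eq_mul]
      linarith [hN j]
  have hmem : (x, s) ∈ Wlev A b c δ := by
    refine h.add_rays_mem_Wlev (fun k => ht0.trans (hx k)) (fun k => ht0.trans (hs k)) ?_
    rw [smul_dotProduct, dotProduct_smul, one_dotProduct, dotProduct_one]
    simp only [Function.comp_apply, smul_eq_mul]
    rw [← mul_add, add_comm, ← h.l1_add_l1_eq, ht, div_mul_cancel₀ _ hLpos.ne']
  exact (le_min (le_ciInf hx) (le_ciInf hs)).trans (h.le_rrad hmem)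

end UniqueOpt

/-- Lemma 2 of the paper. Under the unique-optimum assumption, the
geometric condition number `Φ̂ = liminf_{δ→0⁺} D_δ/r_δ` satisfies `Φ ≤ Φ̂ ≤ 2Φ`. -/
theorem phi_equiv_phiHat (m n : ℕ) (hmn : m ≤ n)
    (A : Matrix (Fin m) (Fin n) ℝ) (b : Fin m → ℝ) (c : Fin n → ℝ)
    (xstar : Fin n → ℝ) (ystar : Fin m → ℝ) (sstar : Fin n → ℝ)
    (h : UniqueOpt hmn A b c xstar ystar sstar) :
    Phi hmn A xstar sstar ≤ PhiHat A b c ∧ PhiHat A b c ≤ 2 * Phi hmn A xstar sstar := by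
  refine le_liminf_and_liminf_le ?_
  filter_upwards [h.eventually_div_le_rrad, h.eventually_PhiFactor_mul_le_Ddiam,
    self_mem_nhdsWithin] with δ hr hD (hδ : 0 < δ)
  have hL : 0 ≤ l1 xstar + l1 sstar :=
    add_nonneg (Finset.sum_nonneg fun _ _ => abs_nonneg _)
      (Finset.sum_nonneg fun _ _ => abs_nonneg _)
  have hD' := h.Ddiam_le hδ.le
  rw [le_antisymm (h.rrad_le hδ.le) hr, div_div_eq_mul_div, le_div_iff₀ hδ, div_le_iff₀ hδ, Phi]
  constructor <;> nlinarith

end LPPaper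
end
end

section
/- Consider the generic LP min gᵀu over u ∈ V ∩ ℝⁿ₊, where V ⊂ ℝⁿ is an affine subspace, and suppose its optimal solution set OPT(g) is the singleton {u*}. Then the stability under data perturbations, the proximity to multiple optima, and the LP sharpness satisfy ζ = η = ‖P_{V⃗}(g)‖ · μ, where V⃗ is the linear subspace parallel to V and P_{V⃗} is orthogonal projection onto V⃗. -/
/-!
Let `d` be a unit feasible direction at `u*` along which the objective grows slowest; it exists
because the unit vectors of the tangent cone of `V ∩ ℝⁿ₊` at `u*` form a compact set, and its
slope `s = ⟪g, d⟫` is positive by uniqueness of `u*`. Tilting the cost to `g - s • d` makes a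
whole segment `u* + t • d` optimal, so `ζ, η ≤ s`. Conversely, if `Δg` makes some `u ≠ u*`
optimal then `‖Δg‖ ‖u - u*‖ ≥ ⟪g, u - u*⟫ ≥ s ‖u - u*‖`. For `u ∈ V` the distance to the optimal
level set in `V` is `⟪g, u - u*⟫ / ‖P_{V⃗} g‖`, so the sharpness ratio is the slope of `u`
divided by `‖P_{V⃗} g‖`, with least value `s / ‖P_{V⃗} g‖`. If the feasible set is `{u*}`, the
three infima are taken over empty sets and all equal `0`.
-/

open scoped BigOperators

noncomputable section

namespace LPGeneric

/-- `ℝⁿ` with the Euclidean norm. -/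
abbrev E (n : ℕ) := EuclideanSpace ℝ (Fin n)

variable {n : ℕ}

/-- The feasible set `F = V ∩ ℝⁿ₊` of the generic LP. -/
def Feas (V : AffineSubspace ℝ (E n)) : Set (E n) := {u | u ∈ V ∧ ∀ i, 0 ≤ u i}

/-- The optimal-solution set `OPT(g)` of the generic LP `min gᵀu` over `V ∩ ℝⁿ₊`. -/
def OPT (V : AffineSubspace ℝ (E n)) (g : E n) : Set (E n) :=
  {u | u ∈ Feas V ∧ ∀ v ∈ Feas V, ∑ i, g i * u i ≤ ∑ i, g i * v i}

/-- Stability under data perturbations: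
`ζ := inf{‖Δg‖ : OPT(g+Δg) ≠ ∅ and OPT(g+Δg) ⊄ OPT(g)}`. -/
def zeta (V : AffineSubspace ℝ (E n)) (g : E n) : ℝ :=
  sInf {t | ∃ dg : E n, t = ‖dg‖ ∧ (OPT V (g + dg)).Nonempty ∧ ¬ OPT V (g + dg) ⊆ OPT V g}

/-- Proximity to multiple optima:
`η := inf{‖Δg‖ : OPT(g+Δg) contains more than one point}`. -/
def eta (V : AffineSubspace ℝ (E n)) (g : E n) : ℝ :=
  sInf {t | ∃ dg : E n, t = ‖dg‖ ∧ ∃ u v, u ∈ OPT V (g + dg) ∧ v ∈ OPT V (g + dg) ∧ u ≠ v}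

/-- LP sharpness:
`μ := inf_{u ∈ F \ OPT(g)} Dist(u, V ∩ {v : gᵀv = gᵀu*}) / Dist(u, OPT(g))`. -/
def mu (V : AffineSubspace ℝ (E n)) (g ustar : E n) : ℝ :=
  sInf {t | ∃ u ∈ Feas V, u ∉ OPT V g ∧
    t = Metric.infDist u ((V : Set (E n)) ∩ {v | ∑ i, g i * v i = ∑ i, g i * ustar i}) /
        Metric.infDist u (OPT V g)}

open scoped RealInnerProductSpace
open Filter Topology

theorem infDist_inter_inner_sub_eq_zero {F : Type*} [NormedAddCommGroup F]
    [InnerProductSpace ℝ F] {V : AffineSubspace ℝ F} {a p u : F} (ha : a ∈ V.direction)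
    (hu : u ∈ V) :
    Metric.infDist u ((V : Set F) ∩ {v | ⟪a, v - p⟫ = 0}) = |⟪a, u - p⟫| / ‖a‖ := by
  rcases eq_or_ne a 0 with rfl | ha0
  · simpa using Metric.infDist_zero_of_mem (s := (V : Set F)) hu
  have hna : 0 < ‖a‖ := norm_pos_iff.2 ha0
  set c := ⟪a, u - p⟫
  -- the foot of the perpendicular from `u`
  set w := u - (c / ‖a‖ ^ 2) • a
  have hw : w ∈ (V : Set F) ∩ {v | ⟪a, v - p⟫ = 0} := by
    refine ⟨?_, ?_⟩
    · simpa [w, vadd_eq_add, sub_eq_neg_add, neg_smul] using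
        V.vadd_mem_of_mem_direction (V.direction.smul_mem (-(c / ‖a‖ ^ 2)) ha) hu
    · have : w - p = (u - p) - (c / ‖a‖ ^ 2) • a := by simp only [w]; abel
      rw [Set.mem_ofPred_eq, this, inner_sub_right, real_inner_smul_right,
        real_inner_self_eq_norm_sq]
      field_simp
      ring
  refine le_antisymm ((Metric.infDist_le_dist_of_mem hw).trans_eq ?_) ?_
  · rw [dist_eq_norm, show u - w = (c / ‖a‖ ^ 2) • a by simp only [w]; abel, norm_smul,
      Real.norm_eq_abs, abs_div, abs_of_pos (pow_pos hna 2)]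
    field_simp
  · refine (Metric.le_infDist ⟨w, hw⟩).2 fun v hv => ?_
    have hc : c = ⟪a, u - v⟫ := by
      rw [show u - v = (u - p) - (v - p) by abel, inner_sub_right, hv.2, sub_zero]
    rw [div_le_iff₀ hna, hc, dist_eq_norm, mul_comm]
    exact abs_real_inner_le_norm a (u - v)

theorem inner_orthogonalProjectionOnto_eq_of_mem {F : Type*} [NormedAddCommGroup F]
    [InnerProductSpace ℝ F] {K : Submodule ℝ F} [K.HasOrthogonalProjection] (g : F) {x : F}
    (hx : x ∈ K) : ⟪(K.orthogonalProjectionOnto g : F), x⟫ = ⟪g, x⟫ :=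
  K.inner_orthogonalProjectionOnto_eq_of_mem_right ⟨x, hx⟩ g

variable {n : ℕ}

theorem sum_mul_eq_inner (g u : E n) : ∑ i, g i * u i = ⟪g, u⟫ := by
  simp [PiLp.inner_apply, mul_comm]

theorem mem_OPT_iff {V : AffineSubspace ℝ (E n)} {g u : E n} :
    u ∈ OPT V g ↔ u ∈ Feas V ∧ ∀ v ∈ Feas V, ⟪g, u⟫ ≤ ⟪g, v⟫ := by
  simp only [OPT, Set.mem_ofPred_eq, sum_mul_eq_inner]

section
variable {V : AffineSubspace ℝ (E n)} {g p d : E n}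

theorem zeta_eq_zero_of_feas_subset (h : Feas V ⊆ OPT V g) : zeta V g = 0 := by
  refine (congrArg sInf (Set.eq_empty_of_forall_notMem ?_)).trans Real.sInf_empty
  rintro t ⟨dg, -, -, hns⟩
  exact hns fun u hu => h hu.1

theorem eta_eq_zero_of_subsingleton (h : (Feas V).Subsingleton) : eta V g = 0 := by
  refine (congrArg sInf (Set.eq_empty_of_forall_notMem ?_)).trans Real.sInf_empty
  rintro t ⟨dg, -, u, v, hu, hv, huv⟩
  exact huv (h hu.1 hv.1)

theorem mu_eq_zero_of_feas_subset (h : Feas V ⊆ OPT V g) : mu V g p = 0 := by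
  refine (congrArg sInf (Set.eq_empty_of_forall_notMem ?_)).trans Real.sInf_empty
  rintro t ⟨u, hu, hnot, -⟩
  exact hnot (h hu)

theorem exists_pos_add_smul_mem_feas (hp : p ∈ Feas V) (hd : d ∈ V.direction)
    (hd_nonneg : ∀ i, p i = 0 → 0 ≤ d i) : ∃ t : ℝ, 0 < t ∧ p + t • d ∈ Feas V := by
  have hcoord : ∀ i, ∀ᶠ t in 𝓝[>] (0 : ℝ), 0 ≤ p i + t * d i := by
    intro i
    rcases (hp.2 i).eq_or_lt with hpi | hpi
    · filter_upwards [self_mem_nhdsWithin] with t ht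
      rw [← hpi, zero_add]
      exact mul_nonneg ht.le (hd_nonneg i hpi.symm)
    · have hlim : Tendsto (fun t : ℝ => p i + t * d i) (𝓝 0) (𝓝 (p i)) :=
        (by fun_prop : Continuous fun t : ℝ => p i + t * d i).tendsto' 0 _ (by simp)
      exact nhdsWithin_le_nhds ((hlim.eventually (lt_mem_nhds hpi)).mono fun _ => le_of_lt)
  obtain ⟨t, hnonneg, ht⟩ := ((eventually_all.2 hcoord).and self_mem_nhdsWithin).exists
  refine ⟨t, ht, ?_, fun i => by simpa using hnonneg i⟩
  simpa [vadd_eq_add, add_comm] using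
    V.vadd_mem_of_mem_direction (V.direction.smul_mem t hd) hp.1

structure IsMinSlopeDir (V : AffineSubspace ℝ (E n)) (g p d : E n) : Prop where
  mem_direction : d ∈ V.direction
  norm_eq_one : ‖d‖ = 1
  exists_add_smul_mem_feas : ∃ t : ℝ, 0 < t ∧ p + t • d ∈ Feas V
  inner_mul_norm_le : ∀ u ∈ Feas V, ⟪g, d⟫ * ‖u - p‖ ≤ ⟪g, u - p⟫

theorem exists_isMinSlopeDir (hp : p ∈ Feas V) {u₀ : E n} (hu₀ : u₀ ∈ Feas V) (hne : u₀ ≠ p) :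
    ∃ d, IsMinSlopeDir V g p d := by
  set D : Set (E n) :=
    {d | d ∈ V.direction ∧ ∀ i, p i = 0 → 0 ≤ d i} ∩ Metric.sphere 0 1
  have hD : ∀ u ∈ Feas V, u ≠ p → ‖u - p‖⁻¹ • (u - p) ∈ D := by
    intro u hu hne
    refine ⟨⟨V.direction.smul_mem _ (V.vsub_mem_direction hu.1 hp.1), fun i hpi => ?_⟩, ?_⟩
    · simpa [hpi] using mul_nonneg (inv_nonneg.2 (norm_nonneg (u - p))) (hu.2 i)
    · simp [norm_smul, sub_ne_zero.2 hne]
  have hD_compact : IsCompact D := by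
    refine (isCompact_sphere 0 1).inter_left ?_
    simp only [Set.ofPred_and, Set.ofPred_forall]
    exact V.direction.closed_of_finiteDimensional.inter <| isClosed_iInter fun i =>
      isClosed_iInter fun _ => isClosed_le continuous_const (PiLp.continuous_apply 2 _ i)
  have hslope_cont : Continuous fun d : E n => ⟪g, d⟫ := continuous_const.inner continuous_id
  obtain ⟨d, ⟨⟨hdV, hd_nonneg⟩, hd_norm⟩, hmin⟩ :=
    hD_compact.exists_isMinOn ⟨_, hD u₀ hu₀ hne⟩ hslope_cont.continuousOn
  refine ⟨d, hdV, by simpa using hd_norm, exists_pos_add_smul_mem_feas hp hdV hd_nonneg,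
    fun u hu => ?_⟩
  rcases eq_or_ne u p with rfl | hup
  · simp
  have hpos : 0 < ‖u - p‖ := norm_pos_iff.2 (sub_ne_zero.2 hup)
  have hslope : ⟪g, d⟫ ≤ ⟪g, ‖u - p‖⁻¹ • (u - p)⟫ := hmin (hD u hu hup)
  rwa [real_inner_smul_right, inv_mul_eq_div, le_div_iff₀ hpos] at hslope


theorem mem_feas_of_OPT_eq_singleton (hopt : OPT V g = {p}) : p ∈ Feas V :=
  (hopt ▸ rfl : p ∈ OPT V g).1

theorem inner_sub_pos_of_OPT_eq_singleton (hopt : OPT V g = {p}) {u : E n} (hu : u ∈ Feas V)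
    (hne : u ≠ p) : 0 < ⟪g, u - p⟫ := by
  have hp : p ∈ OPT V g := hopt ▸ rfl
  by_contra! hle
  refine hne (hopt ▸ mem_OPT_iff.2 ⟨hu, fun v hv => ?_⟩ : u ∈ ({p} : Set (E n)))
  rw [inner_sub_right] at hle
  linarith [(mem_OPT_iff.1 hp).2 v hv]

theorem infDist_objective_level_eq (hp : p ∈ V) {u : E n} (hu : u ∈ V) :
    Metric.infDist u ((V : Set (E n)) ∩ {v | ∑ i, g i * v i = ∑ i, g i * p i}) =
      |⟪g, u - p⟫| / ‖(V.direction.orthogonalProjectionOnto g : E n)‖ := by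
  have hproj : ∀ v ∈ V, ⟪(V.direction.orthogonalProjectionOnto g : E n), v - p⟫ = ⟪g, v - p⟫ :=
    fun v hv => inner_orthogonalProjectionOnto_eq_of_mem g (V.vsub_mem_direction hv hp)
  rw [← hproj u hu, ← infDist_inter_inner_sub_eq_zero (Submodule.coe_mem _) hu]
  congr 1
  ext v
  simp only [Set.mem_inter_iff, Set.mem_ofPred_eq, SetLike.mem_coe, sum_mul_eq_inner]
  refine and_congr_right fun hv => ?_
  rw [hproj v hv, inner_sub_right, sub_eq_zero]

namespace IsMinSlopeDir

theorem add_smul_ne_self (hd : IsMinSlopeDir V g p d) {t : ℝ} (ht : t ≠ 0) : p + t • d ≠ p := by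
  simp [ht, ← norm_ne_zero_iff, hd.norm_eq_one]

theorem inner_pos (hd : IsMinSlopeDir V g p d) (hopt : OPT V g = {p}) : 0 < ⟪g, d⟫ := by
  obtain ⟨t, ht, hfeas⟩ := hd.exists_add_smul_mem_feas
  have := inner_sub_pos_of_OPT_eq_singleton hopt hfeas (hd.add_smul_ne_self ht.ne')
  rw [add_sub_cancel_left, real_inner_smul_right] at this
  exact pos_of_mul_pos_right this ht.le

theorem inner_le_norm_of_mem_OPT_add (hd : IsMinSlopeDir V g p d) (hp : p ∈ Feas V)
    {dg u : E n} (hu : u ∈ OPT V (g + dg)) (hne : u ≠ p) : ⟪g, d⟫ ≤ ‖dg‖ := by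
  have hpos : 0 < ‖u - p‖ := norm_pos_iff.2 (sub_ne_zero.2 hne)
  have hopt : ⟪g + dg, u - p⟫ ≤ 0 := by
    rw [inner_sub_right, sub_nonpos]; exact (mem_OPT_iff.1 hu).2 p hp
  have hcs : -(‖dg‖ * ‖u - p‖) ≤ ⟪dg, u - p⟫ :=
    neg_le_of_abs_le (abs_real_inner_le_norm dg (u - p))
  have hslope := hd.inner_mul_norm_le u (mem_OPT_iff.1 hu).1
  rw [inner_add_left] at hopt
  exact le_of_mul_le_mul_right (by linarith) hpos

theorem mem_OPT_sub_smul (hd : IsMinSlopeDir V g p d) (hp : p ∈ Feas V) (hpos : 0 ≤ ⟪g, d⟫) :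
    p ∈ OPT V (g - ⟪g, d⟫ • d) := by
  refine mem_OPT_iff.2 ⟨hp, fun v hv => ?_⟩
  have hcs : ⟪d, v - p⟫ ≤ ‖v - p‖ := by
    simpa [hd.norm_eq_one] using real_inner_le_norm d (v - p)
  have hslope := hd.inner_mul_norm_le v hv
  rw [← sub_nonneg, ← inner_sub_right, inner_sub_left, real_inner_smul_left]
  nlinarith

theorem add_smul_mem_OPT_sub_smul (hd : IsMinSlopeDir V g p d) (hp : p ∈ Feas V)
    (hpos : 0 ≤ ⟪g, d⟫) {t : ℝ} (ht : p + t • d ∈ Feas V) :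
    p + t • d ∈ OPT V (g - ⟪g, d⟫ • d) := by
  have hmin := mem_OPT_iff.1 (hd.mem_OPT_sub_smul hp hpos)
  have hlevel : ⟪g - ⟪g, d⟫ • d, d⟫ = 0 := by
    rw [inner_sub_left, real_inner_smul_left, real_inner_self_eq_norm_sq, hd.norm_eq_one]
    ring
  refine mem_OPT_iff.2 ⟨ht, fun v hv => ?_⟩
  rw [inner_add_right, real_inner_smul_right, hlevel, mul_zero, add_zero]
  exact hmin.2 v hv

theorem exists_norm_eq_inner_and_two_mem_OPT_add (hd : IsMinSlopeDir V g p d)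
    (hopt : OPT V g = {p}) :
    ∃ dg : E n, ‖dg‖ = ⟪g, d⟫ ∧ ∃ u, u ≠ p ∧ p ∈ OPT V (g + dg) ∧ u ∈ OPT V (g + dg) := by
  have hp := mem_feas_of_OPT_eq_singleton hopt
  have hpos := (hd.inner_pos hopt).le
  obtain ⟨t, ht, hfeas⟩ := hd.exists_add_smul_mem_feas
  refine ⟨-(⟪g, d⟫ • d), ?_, p + t • d, hd.add_smul_ne_self ht.ne', ?_⟩
  · rw [norm_neg, norm_smul, hd.norm_eq_one, mul_one, Real.norm_of_nonneg hpos]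
  · rw [← sub_eq_add_neg]
    exact ⟨hd.mem_OPT_sub_smul hp hpos, hd.add_smul_mem_OPT_sub_smul hp hpos hfeas⟩

theorem zeta_eq (hd : IsMinSlopeDir V g p d) (hopt : OPT V g = {p}) : zeta V g = ⟪g, d⟫ := by
  obtain ⟨dg, hdg, u, hne, hpO, huO⟩ := hd.exists_norm_eq_inner_and_two_mem_OPT_add hopt
  refine IsLeast.csInf_eq
    ⟨⟨dg, hdg.symm, ⟨p, hpO⟩, fun hsub => hne (by simpa [hopt] using hsub huO)⟩, ?_⟩
  rintro _ ⟨dg, rfl, -, hns⟩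
  obtain ⟨u, hu, hnot⟩ := Set.not_subset.1 hns
  exact hd.inner_le_norm_of_mem_OPT_add (mem_feas_of_OPT_eq_singleton hopt) hu
    (by rintro rfl; exact hnot (hopt ▸ rfl))

theorem eta_eq (hd : IsMinSlopeDir V g p d) (hopt : OPT V g = {p}) : eta V g = ⟪g, d⟫ := by
  have hp := mem_feas_of_OPT_eq_singleton hopt
  obtain ⟨dg, hdg, u, hne, hpO, huO⟩ := hd.exists_norm_eq_inner_and_two_mem_OPT_add hopt
  refine IsLeast.csInf_eq ⟨⟨dg, hdg.symm, u, p, huO, hpO, hne⟩, ?_⟩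
  rintro _ ⟨dg, rfl, u, v, hu, hv, huv⟩
  rcases eq_or_ne u p with rfl | hup
  · exact hd.inner_le_norm_of_mem_OPT_add hp hv (Ne.symm huv)
  · exact hd.inner_le_norm_of_mem_OPT_add hp hu hup

theorem mu_eq (hd : IsMinSlopeDir V g p d) (hopt : OPT V g = {p}) :
    mu V g p = ⟪g, d⟫ / ‖(V.direction.orthogonalProjectionOnto g : E n)‖ := by
  have hp := mem_feas_of_OPT_eq_singleton hopt
  have hratio : ∀ u ∈ Feas V, u ≠ p →
      Metric.infDist u ((V : Set (E n)) ∩ {v | ∑ i, g i * v i = ∑ i, g i * p i}) /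
        Metric.infDist u (OPT V g) =
      ⟪g, u - p⟫ / ‖u - p‖ / ‖(V.direction.orthogonalProjectionOnto g : E n)‖ := by
    intro u hu hne
    rw [infDist_objective_level_eq hp.1 hu.1, hopt, Metric.infDist_singleton, dist_eq_norm,
      abs_of_pos (inner_sub_pos_of_OPT_eq_singleton hopt hu hne), div_right_comm]
  obtain ⟨t, ht, hfeas⟩ := hd.exists_add_smul_mem_feas
  have hne := hd.add_smul_ne_self ht.ne'
  refine IsLeast.csInf_eq ⟨⟨p + t • d, hfeas, fun h => hne (by simpa [hopt] using h), ?_⟩, ?_⟩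
  · rw [hratio _ hfeas hne, add_sub_cancel_left, real_inner_smul_right, norm_smul,
      hd.norm_eq_one, Real.norm_of_nonneg ht.le, mul_one, mul_div_cancel_left₀ _ ht.ne']
  · rintro _ ⟨u, hu, hnot, rfl⟩
    have hne : u ≠ p := by rintro rfl; exact hnot (hopt ▸ rfl)
    rw [hratio u hu hne]
    exact div_le_div_of_nonneg_right
      ((le_div_iff₀ (norm_pos_iff.2 (sub_ne_zero.2 hne))).2 (hd.inner_mul_norm_le u hu))
      (norm_nonneg _)

end IsMinSlopeDir

end

/-- Theorem 4 of the paper. For the generic LP `min gᵀu` over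
`V ∩ ℝⁿ₊` with unique optimal solution `u*`, the stability under data perturbations, the
proximity to multiple optima, and the LP sharpness satisfy `ζ = η = ‖P_{V⃗}(g)‖ · μ`. -/
theorem zeta_eq_eta_eq_proj_mul_mu (n : ℕ) (V : AffineSubspace ℝ (E n)) (g ustar : E n)
    (hopt : OPT V g = {ustar}) :
    zeta V g = eta V g ∧
    zeta V g = ‖(Submodule.orthogonalProjectionOnto V.direction g : E n)‖ * mu V g ustar := by
  have hp := mem_feas_of_OPT_eq_singleton hopt
  by_cases hF : ∃ u ∈ Feas V, u ≠ ustar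
  · obtain ⟨u₀, hu₀, hne⟩ := hF
    obtain ⟨d, hd⟩ := exists_isMinSlopeDir (g := g) hp hu₀ hne
    have hproj : ‖(V.direction.orthogonalProjectionOnto g : E n)‖ ≠ 0 := by
      refine norm_ne_zero_iff.2 fun h => (hd.inner_pos hopt).ne' ?_
      rw [← inner_orthogonalProjectionOnto_eq_of_mem g hd.mem_direction, h, inner_zero_left]
    rw [hd.zeta_eq hopt, hd.eta_eq hopt, hd.mu_eq hopt, mul_div_cancel₀ _ hproj]
    exact ⟨rfl, rfl⟩
  · push Not at hF
    have hsub : Feas V ⊆ OPT V g := fun u hu => hopt ▸ hF u hu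
    rw [zeta_eq_zero_of_feas_subset hsub, mu_eq_zero_of_feas_subset hsub, mul_zero,
      eta_eq_zero_of_subsingleton fun u hu v hv => (hF u hu).trans (hF v hv).symm]
    exact ⟨rfl, rfl⟩

end LPGeneric
end
end
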